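/- arXiv:0908.1425 — 6 statements merged into one kernel-verified Lean document; each statement's English description precedes it below -/
import Mathlib

section
/- Let H be a Hopf algebra with universal R-matrix R = Σ_t α_t ⊗ β_t satisfying R·Δ(x) = Δ'(x)·R, (Δ ⊗ id)R = R₁₃R₂₃, and (id ⊗ Δ)R = R₁₃R₁₂. Let (A, μ_A) and (B, μ_B) be H-module algebras. Define a multiplication on A ⊗ B by (a₁ ⊗ b₁)(a₂ ⊗ b₂) = Σ_t a₁·(β_t a₂) ⊗ (α_t b₁)·b₂. Then this multiplication is associative, has identity 1_A ⊗ 1_B, and makes A ⊗ B an H-module algebra under the diagonal action x·(a ⊗ b) = Σ x₍₁₎a ⊗ x₍₂₎b. -/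
/-!
Write `ψ(b, a) = Σ_t β_t a ⊗ α_t b ∈ A ⊗ B` for the braiding induced by `R`, so that the product
is `(a₁ ⊗ b₁)(a₂ ⊗ b₂) = (a₁ ⊗ 1) ψ(b₁, a₂) (1 ⊗ b₂)` computed in the ordinary tensor product
algebra. Evaluating the two hexagon identities on the module-algebra structures of `B` and `A`
gives `ψ(b b', a) = Σ_v ψ(b, β_v a) (1 ⊗ α_v b')` and `ψ(b, a a') = Σ_v (β_v a ⊗ 1) ψ(α_v b, a')`,
and with these both triple products expand to the same double sum. The counit conditions give
`ψ(1, a) = a ⊗ 1` and `ψ(b, 1) = 1 ⊗ b`, hence the unit.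

For the module-algebra property, `x • (u v)` and `Σ (x₍₁₎ • u)(x₍₂₎ • v)` are both evaluations of
elements of `H ⊗ H ⊗ H ⊗ H`, namely of `(Δ ⊗ Δ)(Δ x) · (1 ⊗ R₂₁ ⊗ 1)` and of
`(1 ⊗ R₂₁ ⊗ 1) · τ₂₃((Δ ⊗ Δ)(Δ x))`. By coassociativity the two middle legs of `(Δ ⊗ Δ)(Δ x)` form
`Δ(x₍₂₎)`, and `Δ(y) R₂₁ = R₂₁ Δ'(y)` is the quasi-cocommutativity of `R` read through the flip.
-/

open TensorProduct
open Coalgebra (comul counit)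

namespace Algebra.TensorProduct

variable {R A₁ A₂ A₃ A₄ : Type*} [CommSemiring R] [Semiring A₁] [Algebra R A₁]
  [Semiring A₂] [Algebra R A₂] [Semiring A₃] [Algebra R A₃] [Semiring A₄] [Algebra R A₄]

noncomputable def assocMid :
    (A₁ ⊗[R] (A₂ ⊗[R] A₃)) ⊗[R] A₄ ≃ₐ[R] (A₁ ⊗[R] A₂) ⊗[R] (A₃ ⊗[R] A₄) :=
  (Algebra.TensorProduct.congr (Algebra.TensorProduct.assoc R R R A₁ A₂ A₃).symm
    AlgEquiv.refl).trans (Algebra.TensorProduct.assoc R R R (A₁ ⊗[R] A₂) A₃ A₄)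

@[simp] lemma assocMid_tmul (a₁ : A₁) (a₂ : A₂) (a₃ : A₃) (a₄ : A₄) :
    assocMid ((a₁ ⊗ₜ[R] (a₂ ⊗ₜ[R] a₃)) ⊗ₜ[R] a₄) = (a₁ ⊗ₜ a₂) ⊗ₜ (a₃ ⊗ₜ a₄) :=
  rfl

lemma toLinearMap_assocMid :
    (assocMid : (A₁ ⊗[R] (A₂ ⊗[R] A₃)) ⊗[R] A₄ ≃ₐ[R] _).toLinearMap =
      (_root_.TensorProduct.assoc R (A₁ ⊗[R] A₂) A₃ A₄).toLinearMap ∘ₗ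
        LinearMap.rTensor A₄ (_root_.TensorProduct.assoc R A₁ A₂ A₃).symm.toLinearMap := by
  ext; rfl

lemma tensorTensorTensorComm_assocMid (V : (A₁ ⊗[R] (A₂ ⊗[R] A₃)) ⊗[R] A₄) :
    _root_.TensorProduct.tensorTensorTensorComm R A₁ A₂ A₃ A₄ (assocMid V) =
      assocMid (LinearMap.rTensor A₄
        (LinearMap.lTensor A₁ (_root_.TensorProduct.comm R A₂ A₃).toLinearMap) V) := by
  rw [← AlgEquiv.toLinearMap_apply, ← LinearEquiv.coe_toLinearMap, ← LinearMap.comp_apply,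
    ← AlgEquiv.toLinearMap_apply, ← LinearMap.comp_apply]
  congr 1
  ext; rfl

lemma mul_one_tmul_tmul_one (c : A₂ ⊗[R] A₃) (V : (A₁ ⊗[R] (A₂ ⊗[R] A₃)) ⊗[R] A₄) :
    V * ((1 : A₁) ⊗ₜ c) ⊗ₜ (1 : A₄) =
      LinearMap.rTensor A₄ (LinearMap.lTensor A₁ (LinearMap.mulRight R c)) V := by
  change LinearMap.mulRight R _ V = _
  congr 1
  ext; simp

lemma one_tmul_tmul_one_mul (c : A₂ ⊗[R] A₃) (V : (A₁ ⊗[R] (A₂ ⊗[R] A₃)) ⊗[R] A₄) :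
    ((1 : A₁) ⊗ₜ c) ⊗ₜ (1 : A₄) * V =
      LinearMap.rTensor A₄ (LinearMap.lTensor A₁ (LinearMap.mulLeft R c)) V := by
  change LinearMap.mulLeft R _ V = _
  congr 1
  ext; simp

end Algebra.TensorProduct

section RMatrix

open Algebra.TensorProduct (assocMid)

variable {k H : Type*} [CommSemiring k] [Semiring H] [Algebra k H]

lemma TensorProduct.comm_mul (m n : H ⊗[k] H) :
    TensorProduct.comm k H H (m * n) = TensorProduct.comm k H H m * TensorProduct.comm k H H n :=
  map_mul (Algebra.TensorProduct.comm k H H) m n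

variable [Coalgebra k H]

lemma Coalgebra.mul'_map_counit_comul (x : H) :
    LinearMap.mul' k k (map counit counit (comul x)) = counit (R := k) x := by
  rw [← LinearMap.rTensor_comp_lTensor, LinearMap.comp_apply, lTensor_counit_comul,
    LinearMap.rTensor_tmul, LinearMap.mul'_apply, mul_one]

lemma assocMid_rTensor_lTensor_comul (x : H) :
    assocMid (LinearMap.rTensor H (LinearMap.lTensor H (comul (R := k)))
      (LinearMap.rTensor H (comul (R := k)) (comul x))) = map comul comul (comul x) := by
  have h : (TensorProduct.assoc k (H ⊗[k] H) H H).toLinearMap ∘ₗ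
      LinearMap.rTensor H (TensorProduct.assoc k H H H).symm.toLinearMap ∘ₗ
      LinearMap.rTensor H (LinearMap.lTensor H (comul (R := k))) ∘ₗ
      LinearMap.rTensor H (comul (R := k)) ∘ₗ comul (R := k) =
    map (comul (R := k)) comul ∘ₗ comul := by
    simp only [coassoc_simps]
  rw [← AlgEquiv.toLinearMap_apply, Algebra.TensorProduct.toLinearMap_assocMid]
  exact LinearMap.congr_fun h x

theorem map_comul_comul_comul_mul_assocMid (c : H ⊗[k] H)
    (hc : ∀ y : H, comul (R := k) y * c = c * TensorProduct.comm k H H (comul y)) (x : H) :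
    map comul comul (comul (R := k) x) * assocMid ((1 ⊗ₜ c) ⊗ₜ 1) =
      assocMid ((1 ⊗ₜ c) ⊗ₜ 1) * tensorTensorTensorComm k H H H H (map comul comul (comul x)) := by
  set Δ : H →ₗ[k] H ⊗[k] H := comul
  set w := LinearMap.rTensor H Δ (Δ x)
  have hc' : LinearMap.mulRight k c ∘ₗ Δ =
      LinearMap.mulLeft k c ∘ₗ (TensorProduct.comm k H H).toLinearMap ∘ₗ Δ :=
    LinearMap.ext hc
  calc map Δ Δ (Δ x) * assocMid ((1 ⊗ₜ c) ⊗ₜ 1)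
      = assocMid (LinearMap.rTensor H (LinearMap.lTensor H (LinearMap.mulRight k c ∘ₗ Δ)) w) := by
        rw [← assocMid_rTensor_lTensor_comul, ← map_mul,
          Algebra.TensorProduct.mul_one_tmul_tmul_one, LinearMap.lTensor_comp,
          LinearMap.rTensor_comp, LinearMap.comp_apply]
    _ = assocMid (LinearMap.rTensor H (LinearMap.lTensor H
          (LinearMap.mulLeft k c ∘ₗ (TensorProduct.comm k H H).toLinearMap ∘ₗ Δ)) w) := by
        rw [hc']
    _ = _ := by
        rw [← assocMid_rTensor_lTensor_comul, Algebra.TensorProduct.tensorTensorTensorComm_assocMid,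
          ← map_mul, Algebra.TensorProduct.one_tmul_tmul_one_mul]
        simp only [LinearMap.lTensor_comp, LinearMap.rTensor_comp, LinearMap.comp_apply]
        rfl

end RMatrix

namespace BraidedTensorProduct

open Algebra.TensorProduct (assocMid)

variable {k H A B : Type*} [CommSemiring k] [Semiring H] [Bialgebra k H]
  [Semiring A] [Algebra k A] [Semiring B] [Algebra k B]

section Action

variable {actA : H →ₗ[k] A →ₗ[k] A} {actB : H →ₗ[k] B →ₗ[k] B}

lemma map₂_mul (hAmul : ∀ x y, actA (x * y) = actA x ∘ₗ actA y)
    (hBmul : ∀ x y, actB (x * y) = actB x ∘ₗ actB y) (m n : H ⊗[k] H) :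
    map₂ actA actB (m * n) = map₂ actA actB m ∘ₗ map₂ actA actB n := by
  induction m using TensorProduct.induction_on with
  | zero => simp
  | add m m' hm hm' => simp only [add_mul, map_add, hm, hm', LinearMap.add_comp]
  | tmul y z =>
    induction n using TensorProduct.induction_on with
    | zero => simp
    | add n n' hn hn' => simp only [mul_add, map_add, hn, hn', LinearMap.comp_add]
    | tmul y' z' => simp [hAmul, hBmul, map_comp]

lemma map₂_comul_one (hAone : actA 1 = LinearMap.id) (hBone : actB 1 = LinearMap.id) :
    map₂ actA actB (comul (1 : H)) = LinearMap.id := by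
  rw [Bialgebra.comul_one, Algebra.TensorProduct.one_def, map₂_apply_tmul, hAone, hBone, map_id]

lemma map₂_comul_mul (hAmul : ∀ x y, actA (x * y) = actA x ∘ₗ actA y)
    (hBmul : ∀ x y, actB (x * y) = actB x ∘ₗ actB y) (x y : H) :
    map₂ actA actB (comul (x * y)) = map₂ actA actB (comul x) ∘ₗ map₂ actA actB (comul y) := by
  rw [Bialgebra.comul_mul, map₂_mul hAmul hBmul]

lemma map₂_comul_apply_one_tmul_one (hAunit : ∀ x : H, actA x 1 = counit (R := k) x • 1)
    (hBunit : ∀ x : H, actB x 1 = counit (R := k) x • 1) (x : H) :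
    map₂ actA actB (comul x) (1 ⊗ₜ 1) = counit (R := k) x • ((1 : A) ⊗ₜ[k] (1 : B)) := by
  have h (m : H ⊗[k] H) : map₂ actA actB m (1 ⊗ₜ 1) =
      LinearMap.mul' k k (map counit counit m) • ((1 : A) ⊗ₜ[k] (1 : B)) := by
    induction m using TensorProduct.induction_on with
    | zero => simp
    | add m m' hm hm' => simp only [map_add, LinearMap.add_apply, hm, hm', add_smul]
    | tmul y z => simp [hAunit, hBunit, smul_tmul', smul_smul, mul_comm]
  rw [h, Coalgebra.mul'_map_counit_comul]

end Action

noncomputable def evalMul (act : H →ₗ[k] A →ₗ[k] A) (a a' : A) : H ⊗[k] H →ₗ[k] A :=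
  LinearMap.mul' k A ∘ₗ map (act.flip a) (act.flip a')

@[simp] lemma evalMul_tmul (act : H →ₗ[k] A →ₗ[k] A) (a a' : A) (p q : H) :
    evalMul act a a' (p ⊗ₜ q) = act p a * act q a' := by
  simp [evalMul]

lemma mul'_homTensorHomMap_map_tmul (act : H →ₗ[k] A →ₗ[k] A) (w : H ⊗[k] H) (a a' : A) :
    LinearMap.mul' k A (homTensorHomMap (RingHom.id k) A A A A (map act act w) (a ⊗ₜ a')) =
      evalMul act a a' w := by
  induction w using TensorProduct.induction_on with
  | zero => simp
  | add w w' hw hw' => simp only [map_add, LinearMap.add_apply, hw, hw']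
  | tmul p q => simp

section Mul

variable {act : H →ₗ[k] A →ₗ[k] A} (hmul : ∀ x y, act (x * y) = act x ∘ₗ act y)
include hmul

lemma evalMul_mul_one_tmul (a a' : A) (n : H ⊗[k] H) (h : H) :
    evalMul act a a' (n * (1 ⊗ₜ h)) = evalMul act a (act h a') n := by
  induction n using TensorProduct.induction_on with
  | zero => simp
  | add n n' hn hn' => simp only [add_mul, map_add, hn, hn']
  | tmul p q => simp [hmul]

lemma evalMul_mul_tmul_one (a a' : A) (n : H ⊗[k] H) (h : H) :
    evalMul act a a' (n * (h ⊗ₜ 1)) = evalMul act (act h a) a' n := by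
  induction n using TensorProduct.induction_on with
  | zero => simp
  | add n n' hn hn' => simp only [add_mul, map_add, hn, hn']
  | tmul p q => simp [hmul]

end Mul

variable (actA : H →ₗ[k] A →ₗ[k] A) (actB : H →ₗ[k] B →ₗ[k] B) {ι : Type*} [Fintype ι]
  (α β : ι → H)

noncomputable def braidedMul : (A ⊗[k] B) ⊗[k] (A ⊗[k] B) →ₗ[k] A ⊗[k] B :=
  ∑ t, map (LinearMap.mul' k A) (LinearMap.mul' k B) ∘ₗ
    map (map LinearMap.id (actA (β t))) (map (actB (α t)) LinearMap.id) ∘ₗ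
    (tensorTensorTensorComm k A B A B).toLinearMap

noncomputable def braiding (b : B) (a : A) : A ⊗[k] B :=
  ∑ t, actA (β t) a ⊗ₜ actB (α t) b

lemma braidedMul_tmul (a₁ a₂ : A) (b₁ b₂ : B) :
    braidedMul actA actB α β ((a₁ ⊗ₜ b₁) ⊗ₜ (a₂ ⊗ₜ b₂)) =
      ∑ t, (a₁ * actA (β t) a₂) ⊗ₜ (actB (α t) b₁ * b₂) := by
  simp [braidedMul, LinearMap.sum_apply]

lemma braidedMul_tmul_eq_mul_braiding_mul (a₁ a₂ : A) (b₁ b₂ : B) :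
    braidedMul actA actB α β ((a₁ ⊗ₜ b₁) ⊗ₜ (a₂ ⊗ₜ b₂)) =
      (a₁ ⊗ₜ 1) * braiding actA actB α β b₁ a₂ * (1 ⊗ₜ b₂) := by
  simp [braidedMul_tmul, braiding, Finset.mul_sum, Finset.sum_mul]

variable {actA actB α β}

lemma braiding_one_left (hAone : actA 1 = LinearMap.id)
    (hBunit : ∀ x : H, actB x 1 = counit (R := k) x • 1)
    (hcounit : ∑ t, counit (R := k) (α t) • β t = 1) (a : A) :
    braiding actA actB α β 1 a = a ⊗ₜ 1 := by
  have h : ∑ t, counit (R := k) (α t) • actA (β t) a = a := by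
    simpa [hAone] using congr(actA $hcounit a)
  simp only [braiding, hBunit, ← smul_tmul, ← sum_tmul, h]

lemma braiding_one_right (hBone : actB 1 = LinearMap.id)
    (hAunit : ∀ x : H, actA x 1 = counit (R := k) x • 1)
    (hcounit : ∑ t, counit (R := k) (β t) • α t = 1) (b : B) :
    braiding actA actB α β b 1 = 1 ⊗ₜ b := by
  have h : ∑ t, counit (R := k) (β t) • actB (α t) b = b := by
    simpa [hBone] using congr(actB $hcounit b)
  simp only [braiding, hAunit, smul_tmul, ← tmul_sum, h]

lemma braidedMul_one_tmul_one_left (hAone : actA 1 = LinearMap.id)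
    (hBunit : ∀ x : H, actB x 1 = counit (R := k) x • 1)
    (hcounit : ∑ t, counit (R := k) (α t) • β t = 1) (u : A ⊗[k] B) :
    braidedMul actA actB α β ((1 ⊗ₜ 1) ⊗ₜ u) = u := by
  induction u using TensorProduct.induction_on with
  | zero => simp
  | add u v hu hv => rw [tmul_add, map_add, hu, hv]
  | tmul a b =>
    rw [braidedMul_tmul_eq_mul_braiding_mul, braiding_one_left hAone hBunit hcounit]
    simp

lemma braidedMul_tmul_one_tmul_one_right (hBone : actB 1 = LinearMap.id)
    (hAunit : ∀ x : H, actA x 1 = counit (R := k) x • 1)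
    (hcounit : ∑ t, counit (R := k) (β t) • α t = 1) (u : A ⊗[k] B) :
    braidedMul actA actB α β (u ⊗ₜ (1 ⊗ₜ 1)) = u := by
  induction u using TensorProduct.induction_on with
  | zero => simp
  | add u v hu hv => rw [add_tmul, map_add, hu, hv]
  | tmul a b =>
    rw [braidedMul_tmul_eq_mul_braiding_mul, braiding_one_right hBone hAunit hcounit]
    simp

lemma braiding_mul_left (hAmul : ∀ x y, actA (x * y) = actA x ∘ₗ actA y)
    (hBalg : ∀ x b b', actB x (b * b') = evalMul actB b b' (comul x))
    (hhex : ∑ s, TensorProduct.assoc k H H H (comul (α s) ⊗ₜ β s) =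
      ∑ u, ∑ v, α u ⊗ₜ (α v ⊗ₜ (β u * β v))) (b b' : B) (a : A) :
    braiding actA actB α β (b * b') a =
      ∑ v, braiding actA actB α β b (actA (β v) a) * (1 ⊗ₜ actB (α v) b') := by
  let E : H ⊗[k] (H ⊗[k] H) →ₗ[k] A ⊗[k] B :=
    map (actA.flip a) (evalMul actB b b') ∘ₗ (TensorProduct.comm k (H ⊗[k] H) H).toLinearMap ∘ₗ
      (TensorProduct.assoc k H H H).symm.toLinearMap
  calc braiding actA actB α β (b * b') a
      = E (∑ s, TensorProduct.assoc k H H H (comul (α s) ⊗ₜ β s)) := by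
        simp [braiding, E, hBalg]
    _ = ∑ u, ∑ v, actA (β u) (actA (β v) a) ⊗ₜ (actB (α u) b * actB (α v) b') := by
        simp [hhex, E, hAmul]
    _ = _ := by
        rw [Finset.sum_comm]
        simp [braiding, Finset.sum_mul]

lemma braiding_mul_right (hBmul : ∀ x y, actB (x * y) = actB x ∘ₗ actB y)
    (hAalg : ∀ x a a', actA x (a * a') = evalMul actA a a' (comul x))
    (hhex : ∑ t, α t ⊗ₜ comul (R := k) (β t) = ∑ u, ∑ v, (α u * α v) ⊗ₜ[k] (β v ⊗ₜ β u))
    (b : B) (a a' : A) :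
    braiding actA actB α β b (a * a') =
      ∑ v, (actA (β v) a ⊗ₜ 1) * braiding actA actB α β (actB (α v) b) a' := by
  let E : H ⊗[k] (H ⊗[k] H) →ₗ[k] A ⊗[k] B :=
    (TensorProduct.comm k B A).toLinearMap ∘ₗ map (actB.flip b) (evalMul actA a a')
  calc braiding actA actB α β b (a * a')
      = E (∑ t, α t ⊗ₜ comul (β t)) := by
        simp [braiding, E, hAalg]
    _ = ∑ u, ∑ v, (actA (β v) a * actA (β u) a') ⊗ₜ actB (α u) (actB (α v) b) := by
        simp [hhex, E, hBmul]
    _ = _ := by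
        rw [Finset.sum_comm]
        simp [braiding, Finset.mul_sum]

section Hexagon

variable (hAmul : ∀ x y, actA (x * y) = actA x ∘ₗ actA y)
  (hBmul : ∀ x y, actB (x * y) = actB x ∘ₗ actB y)
  (hAalg : ∀ x a a', actA x (a * a') = evalMul actA a a' (comul x))
  (hBalg : ∀ x b b', actB x (b * b') = evalMul actB b b' (comul x))
  (hhex₁ : ∑ s, TensorProduct.assoc k H H H (comul (α s) ⊗ₜ β s) =
    ∑ u, ∑ v, α u ⊗ₜ (α v ⊗ₜ (β u * β v)))
  (hhex₂ : ∑ t, α t ⊗ₜ comul (R := k) (β t) = ∑ u, ∑ v, (α u * α v) ⊗ₜ[k] (β v ⊗ₜ β u))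
include hAmul hBmul hAalg hBalg hhex₁ hhex₂

theorem braidedMul_assoc_tmul (a₁ a₂ a₃ : A) (b₁ b₂ b₃ : B) :
    braidedMul actA actB α β (braidedMul actA actB α β ((a₁ ⊗ₜ b₁) ⊗ₜ (a₂ ⊗ₜ b₂)) ⊗ₜ (a₃ ⊗ₜ b₃)) =
      braidedMul actA actB α β
        ((a₁ ⊗ₜ b₁) ⊗ₜ braidedMul actA actB α β ((a₂ ⊗ₜ b₂) ⊗ₜ (a₃ ⊗ₜ b₃))) := by
  rw [braidedMul_tmul, braidedMul_tmul, sum_tmul, tmul_sum, map_sum, map_sum]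
  simp only [braidedMul_tmul_eq_mul_braiding_mul, braiding_mul_left hAmul hBalg hhex₁,
    braiding_mul_right hBmul hAalg hhex₂, Finset.mul_sum, Finset.sum_mul]
  rw [Finset.sum_comm]
  refine Finset.sum_congr rfl fun s _ => Finset.sum_congr rfl fun t _ => ?_
  simp only [← mul_assoc, Algebra.TensorProduct.tmul_mul_tmul, mul_one]
  rw [mul_assoc _ (1 ⊗ₜ _), Algebra.TensorProduct.tmul_mul_tmul, one_mul]

theorem braidedMul_assoc (u v w : A ⊗[k] B) :
    braidedMul actA actB α β (braidedMul actA actB α β (u ⊗ₜ v) ⊗ₜ w) =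
      braidedMul actA actB α β (u ⊗ₜ braidedMul actA actB α β (v ⊗ₜ w)) := by
  induction u using TensorProduct.induction_on with
  | zero => simp
  | add u u' hu hu' => simp only [add_tmul, map_add, hu, hu']
  | tmul a₁ b₁ =>
    induction v using TensorProduct.induction_on with
    | zero => simp
    | add v v' hv hv' => simp only [add_tmul, tmul_add, map_add, hv, hv']
    | tmul a₂ b₂ =>
      induction w using TensorProduct.induction_on with
      | zero => simp
      | add w w' hw hw' => simp only [tmul_add, map_add, hw, hw']
      | tmul a₃ b₃ => exact braidedMul_assoc_tmul hAmul hBmul hAalg hBalg hhex₁ hhex₂ _ _ _ _ _ _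

end Hexagon

section ModuleAlgebra

variable (hAmul : ∀ x y, actA (x * y) = actA x ∘ₗ actA y)
  (hBmul : ∀ x y, actB (x * y) = actB x ∘ₗ actB y)
include hAmul hBmul

theorem map₂_braidedMul_tmul (hAalg : ∀ x a a', actA x (a * a') = evalMul actA a a' (comul x))
    (hBalg : ∀ x b b', actB x (b * b') = evalMul actB b b' (comul x))
    (m : H ⊗[k] H) (a₁ a₂ : A) (b₁ b₂ : B) :
    map₂ actA actB m (braidedMul actA actB α β ((a₁ ⊗ₜ b₁) ⊗ₜ (a₂ ⊗ₜ b₂))) =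
      map (evalMul actA a₁ a₂) (evalMul actB b₁ b₂)
        (map comul comul m * assocMid ((1 ⊗ₜ ∑ t, β t ⊗ₜ α t) ⊗ₜ 1)) := by
  induction m using TensorProduct.induction_on with
  | zero => simp
  | add m m' hm hm' => simp only [map_add, LinearMap.add_apply, add_mul, hm, hm']
  | tmul y z =>
    simp only [braidedMul_tmul, map_sum, tmul_sum, sum_tmul, Finset.mul_sum, map₂_apply_tmul,
      map_tmul, Algebra.TensorProduct.assocMid_tmul, Algebra.TensorProduct.tmul_mul_tmul, hAalg,
      hBalg, evalMul_mul_one_tmul hAmul, evalMul_mul_tmul_one hBmul]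

theorem braidedMul_map₂_tmul_map₂ (n₁ n₂ : H ⊗[k] H) (a₁ a₂ : A) (b₁ b₂ : B) :
    braidedMul actA actB α β (map₂ actA actB n₁ (a₁ ⊗ₜ b₁) ⊗ₜ map₂ actA actB n₂ (a₂ ⊗ₜ b₂)) =
      map (evalMul actA a₁ a₂) (evalMul actB b₁ b₂)
        (assocMid ((1 ⊗ₜ ∑ t, β t ⊗ₜ α t) ⊗ₜ 1) * tensorTensorTensorComm k H H H H (n₁ ⊗ₜ n₂)) := by
  induction n₁ using TensorProduct.induction_on with
  | zero => simp
  | add n n' hn hn' => simp only [map_add, LinearMap.add_apply, add_tmul, mul_add, hn, hn']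
  | tmul y₁ y₂ =>
    induction n₂ using TensorProduct.induction_on with
    | zero => simp
    | add n n' hn hn' => simp only [map_add, LinearMap.add_apply, tmul_add, mul_add, hn, hn']
    | tmul z₁ z₂ => simp [braidedMul_tmul, tmul_sum, sum_tmul, Finset.sum_mul, hAmul, hBmul]

theorem map₂_comul_braidedMul (hAalg : ∀ x a a', actA x (a * a') = evalMul actA a a' (comul x))
    (hBalg : ∀ x b b', actB x (b * b') = evalMul actB b b' (comul x))
    (hR : ∀ y : H, comul (R := k) y * ∑ t, β t ⊗ₜ α t =
      (∑ t, β t ⊗ₜ α t) * TensorProduct.comm k H H (comul y))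
    (x : H) (u v : A ⊗[k] B) :
    map₂ actA actB (comul x) (braidedMul actA actB α β (u ⊗ₜ v)) =
      braidedMul actA actB α β (homTensorHomMap (RingHom.id k) _ _ _ _
        (map (map₂ actA actB ∘ₗ comul) (map₂ actA actB ∘ₗ comul) (comul x)) (u ⊗ₜ v)) := by
  induction u using TensorProduct.induction_on with
  | zero => simp
  | add u u' hu hu' => simp only [add_tmul, map_add, hu, hu']
  | tmul a₁ b₁ =>
    induction v using TensorProduct.induction_on with
    | zero => simp
    | add v v' hv hv' => simp only [tmul_add, map_add, hv, hv']
    | tmul a₂ b₂ =>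
      have hdiag (m : H ⊗[k] H) :
          braidedMul actA actB α β (homTensorHomMap (RingHom.id k) _ _ _ _
            (map (map₂ actA actB ∘ₗ comul) (map₂ actA actB ∘ₗ comul) m)
              ((a₁ ⊗ₜ b₁) ⊗ₜ (a₂ ⊗ₜ b₂))) =
          map (evalMul actA a₁ a₂) (evalMul actB b₁ b₂)
            (assocMid ((1 ⊗ₜ ∑ t, β t ⊗ₜ α t) ⊗ₜ 1) *
              tensorTensorTensorComm k H H H H (map comul comul m)) := by
        induction m using TensorProduct.induction_on with
        | zero => simp
        | add m m' hm hm' => simp only [map_add, LinearMap.add_apply, mul_add, hm, hm']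
        | tmul y z => simp [braidedMul_map₂_tmul_map₂ hAmul hBmul]
      rw [map₂_braidedMul_tmul hAmul hBmul hAalg hBalg, map_comul_comul_comul_mul_assocMid _ hR,
        hdiag]

end ModuleAlgebra

end BraidedTensorProduct

/-- Braided tensor product of module algebras.  Given `H`-module algebras
`A`, `B` and a universal R-matrix `R = Σ_t α_t ⊗ β_t` (a finite family of elements of
`H`) satisfying the hexagon relations, `R Δ = Δ' R` and the counit conditions, the
multiplication `(a₁⊗b₁)(a₂⊗b₂) = Σ_t a₁(β_t a₂) ⊗ (α_t b₁)b₂` on `A ⊗ B` is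
associative with identity `1 ⊗ 1`, and makes `A ⊗ B` an `H`-module algebra for the
diagonal action. -/
theorem stmt3 {k : Type*} [Field k] {H : Type*} [Ring H] [HopfAlgebra k H]
    {A : Type*} [Ring A] [Algebra k A] {B : Type*} [Ring B] [Algebra k B]
    (actA : H →ₗ[k] A →ₗ[k] A) (actB : H →ₗ[k] B →ₗ[k] B)
    (hAone : actA 1 = LinearMap.id) (hAmul : ∀ x y, actA (x * y) = actA x ∘ₗ actA y)
    (hBone : actB 1 = LinearMap.id) (hBmul : ∀ x y, actB (x * y) = actB x ∘ₗ actB y)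
    (hAalg : ∀ (x : H) (a a' : A),
      actA x (a * a') = LinearMap.mul' k A
        ((TensorProduct.homTensorHomMap (RingHom.id k) A A A A
            ((TensorProduct.map actA actA) (Coalgebra.comul (R := k) x))) (a ⊗ₜ[k] a')))
    (hAunit : ∀ x : H, actA x (1 : A) = Coalgebra.counit (R := k) x • (1 : A))
    (hBalg : ∀ (x : H) (b b' : B),
      actB x (b * b') = LinearMap.mul' k B
        ((TensorProduct.homTensorHomMap (RingHom.id k) B B B B
            ((TensorProduct.map actB actB) (Coalgebra.comul (R := k) x))) (b ⊗ₜ[k] b')))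
    (hBunit : ∀ x : H, actB x (1 : B) = Coalgebra.counit (R := k) x • (1 : B))
    -- the R-matrix, given by a finite family of elements of `H`
    (N : ℕ) (α β : Fin N → H)
    -- `R Δ(x) = Δ'(x) R` in `H ⊗ H`
    (hRD : ∀ x : H,
      (∑ t, α t ⊗ₜ[k] β t) * Bialgebra.comulAlgHom k H x =
        (TensorProduct.comm k H H) (Bialgebra.comulAlgHom k H x) * ∑ t, α t ⊗ₜ[k] β t)
    -- hexagon `(Δ ⊗ id)R = R₁₃ R₂₃` in `H ⊗ (H ⊗ H)`
    (hhex1 :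
      (∑ t, (Algebra.TensorProduct.assoc k k k H H H)
          ((Coalgebra.comul (R := k) (α t)) ⊗ₜ[k] β t)) =
        (∑ t, α t ⊗ₜ[k] ((1 : H) ⊗ₜ[k] β t)) * ∑ t, (1 : H) ⊗ₜ[k] (α t ⊗ₜ[k] β t))
    -- hexagon `(id ⊗ Δ)R = R₁₃ R₁₂` in `H ⊗ (H ⊗ H)`
    (hhex2 :
      (∑ t, α t ⊗ₜ[k] (Coalgebra.comul (R := k) (β t))) =
        (∑ t, α t ⊗ₜ[k] ((1 : H) ⊗ₜ[k] β t)) * ∑ t, α t ⊗ₜ[k] (β t ⊗ₜ[k] (1 : H)))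
    -- counit conditions `(ε ⊗ id)R = 1`, `(id ⊗ ε)R = 1`
    (hcounit1 : (∑ t, Coalgebra.counit (R := k) (α t) • β t) = (1 : H))
    (hcounit2 : (∑ t, Coalgebra.counit (R := k) (β t) • α t) = (1 : H)) :
    -- the braided multiplication on `A ⊗ B`
    let mulAB : (A ⊗[k] B) ⊗[k] (A ⊗[k] B) →ₗ[k] A ⊗[k] B :=
      ∑ t, (TensorProduct.map (LinearMap.mul' k A) (LinearMap.mul' k B)) ∘ₗ
        (TensorProduct.map (TensorProduct.map LinearMap.id (actA (β t)))
          (TensorProduct.map (actB (α t)) LinearMap.id)) ∘ₗ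
        (TensorProduct.tensorTensorTensorComm k A B A B).toLinearMap
    -- the diagonal action of `H` on `A ⊗ B`
    let actAB : H →ₗ[k] (A ⊗[k] B) →ₗ[k] (A ⊗[k] B) :=
      (TensorProduct.homTensorHomMap (RingHom.id k) A B A B) ∘ₗ
        (TensorProduct.map actA actB) ∘ₗ (Coalgebra.comul (R := k))
    -- associativity
    (∀ u v w : A ⊗[k] B, mulAB ((mulAB (u ⊗ₜ[k] v)) ⊗ₜ[k] w) =
        mulAB (u ⊗ₜ[k] (mulAB (v ⊗ₜ[k] w)))) ∧
    -- identity element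
    (∀ u : A ⊗[k] B, mulAB (((1 : A) ⊗ₜ[k] (1 : B)) ⊗ₜ[k] u) = u ∧
        mulAB (u ⊗ₜ[k] ((1 : A) ⊗ₜ[k] (1 : B))) = u) ∧
    -- the diagonal action is an `H`-module structure
    (actAB 1 = LinearMap.id) ∧ (∀ x y : H, actAB (x * y) = actAB x ∘ₗ actAB y) ∧
    -- `H` acts on products via the comultiplication
    (∀ (x : H) (u v : A ⊗[k] B),
      actAB x (mulAB (u ⊗ₜ[k] v)) =
        mulAB ((TensorProduct.homTensorHomMap (RingHom.id k) (A ⊗[k] B) (A ⊗[k] B) (A ⊗[k] B) (A ⊗[k] B)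
            ((TensorProduct.map actAB actAB) (Coalgebra.comul (R := k) x))) (u ⊗ₜ[k] v))) ∧
    -- `H` acts on the identity via the counit
    (∀ x : H, actAB x ((1 : A) ⊗ₜ[k] (1 : B)) =
        Coalgebra.counit (R := k) x • ((1 : A) ⊗ₜ[k] (1 : B))) := by
  intro mulAB actAB
  have hAalg' (x : H) (a a' : A) :
      actA x (a * a') = BraidedTensorProduct.evalMul actA a a' (comul x) := by
    rw [hAalg, BraidedTensorProduct.mul'_homTensorHomMap_map_tmul]
  have hBalg' (x : H) (b b' : B) :
      actB x (b * b') = BraidedTensorProduct.evalMul actB b b' (comul x) := by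
    rw [hBalg, BraidedTensorProduct.mul'_homTensorHomMap_map_tmul]
  have hhex₁ : ∑ s, TensorProduct.assoc k H H H (comul (α s) ⊗ₜ β s) =
      ∑ u, ∑ v, α u ⊗ₜ (α v ⊗ₜ (β u * β v)) := by
    rw [Finset.sum_mul_sum] at hhex1
    simp only [Algebra.TensorProduct.tmul_mul_tmul, one_mul, mul_one] at hhex1
    -- `Algebra.TensorProduct.assoc` unfolds to `TensorProduct.assoc`, but not reducibly
    exact hhex1
  have hhex₂ : ∑ t, α t ⊗ₜ comul (R := k) (β t) = ∑ u, ∑ v, (α u * α v) ⊗ₜ[k] (β v ⊗ₜ β u) := by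
    rw [Finset.sum_mul_sum] at hhex2
    simpa only [Algebra.TensorProduct.tmul_mul_tmul, one_mul, mul_one] using hhex2
  have hR (y : H) : comul (R := k) y * ∑ t, β t ⊗ₜ α t =
      (∑ t, β t ⊗ₜ α t) * TensorProduct.comm k H H (comul y) := by
    simpa [TensorProduct.comm_mul, map_sum] using (congr(TensorProduct.comm k H H $(hRD y))).symm
  -- `actAB` unfolds to `map₂ actA actB ∘ₗ comul`
  exact ⟨BraidedTensorProduct.braidedMul_assoc hAmul hBmul hAalg' hBalg' hhex₁ hhex₂,
    fun u => ⟨BraidedTensorProduct.braidedMul_one_tmul_one_left hAone hBunit hcounit1 u,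
      BraidedTensorProduct.braidedMul_tmul_one_tmul_one_right hBone hAunit hcounit2 u⟩,
    BraidedTensorProduct.map₂_comul_one hAone hBone,
    BraidedTensorProduct.map₂_comul_mul hAmul hBmul,
    BraidedTensorProduct.map₂_comul_braidedMul hAmul hBmul hAalg' hBalg' hR,
    BraidedTensorProduct.map₂_comul_apply_one_tmul_one hAunit hBunit⟩
end

section
/- Let A be the associative K-algebra generated by v_i, v_{-i} (i = 1,…,n) subject to the relations: v_i v_j = q^{-1} v_j v_i and v_{-j} v_{-i} = q^{-1} v_{-i} v_{-j} for i < j; v_i v_{-j} = q^{-1} v_{-j} v_i for i ≠ j; v_i v_{-i} − v_{-i} v_i = q v_{i+1} v_{-i-1} − q^{-1} v_{-i-1} v_{i+1} for 1 ≤ i ≤ n−1; and v_n v_{-n} = v_{-n} v_n. Define φ⁺_i = Σ_{k=i}^n q^{n−k} v_k v_{-k}. Then φ⁺_1 lies in the center of A. -/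
/-- In the braided symmetric algebra `S_q(V)` of the natural
`U_q(so_{2n})`-module, presented by generators `v_i = vp i`, `v_{-i} = vm i`
(`1 ≤ i ≤ n`) and the stated relations, the element
`φ⁺₁ = Σ_{k=1}^n q^{n−k} v_k v_{-k}` is central: it commutes with every element of the
subalgebra generated by the generators. -/
theorem stmt6 {K : Type*} [Field K] {A : Type*} [Ring A] [Algebra K A]
    (q : K) (hq : q ≠ 0) (n : ℕ)
    (vp vm : ℕ → A)
    (r1 : ∀ i j, 1 ≤ i → i < j → j ≤ n → vp i * vp j = q⁻¹ • (vp j * vp i))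
    (r2 : ∀ i j, 1 ≤ i → i < j → j ≤ n → vm j * vm i = q⁻¹ • (vm i * vm j))
    (r3 : ∀ i j, 1 ≤ i → 1 ≤ j → i ≤ n → j ≤ n → i ≠ j →
      vp i * vm j = q⁻¹ • (vm j * vp i))
    (r4 : ∀ i, 1 ≤ i → i + 1 ≤ n →
      vp i * vm i - vm i * vp i =
        q • (vp (i + 1) * vm (i + 1)) - q⁻¹ • (vm (i + 1) * vp (i + 1)))
    (r5 : vp n * vm n = vm n * vp n) :
    ∀ a ∈ Algebra.adjoin K {x : A | ∃ i, 1 ≤ i ∧ i ≤ n ∧ (x = vp i ∨ x = vm i)},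
      Commute (∑ k ∈ Finset.Icc 1 n, q ^ (n - k) • (vp k * vm k)) a := by
  have hqi : q⁻¹ * q = 1 := inv_mul_cancel₀ hq
  have hqi' : q * q⁻¹ = 1 := mul_inv_cancel₀ hq
  -- flipped relations
  have f1 : ∀ i j, 1 ≤ i → i < j → j ≤ n → vp j * vp i = q • (vp i * vp j) := by
    intro i j h1 h2 h3
    rw [r1 i j h1 h2 h3, smul_smul, hqi', one_smul]
  have f2 : ∀ i j, 1 ≤ i → i < j → j ≤ n → vm i * vm j = q • (vm j * vm i) := by
    intro i j h1 h2 h3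
    rw [r2 i j h1 h2 h3, smul_smul, hqi', one_smul]
  have f3 : ∀ i j, 1 ≤ i → 1 ≤ j → i ≤ n → j ≤ n → i ≠ j →
      vm j * vp i = q • (vp i * vm j) := by
    intro i j h1 h2 h3 h4 h5
    rw [r3 i j h1 h2 h3 h4 h5, smul_smul, hqi', one_smul]
  -- small-index terms commute with vp j, vm j
  have cswp : ∀ k j, 1 ≤ k → k < j → j ≤ n →
      (vp k * vm k) * vp j = vp j * (vp k * vm k) := by
    intro k j hk hkj hj
    have hk' : k ≤ n := le_trans hkj.le hj
    have hj1 : 1 ≤ j := le_trans hk hkj.le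
    calc (vp k * vm k) * vp j = vp k * (vm k * vp j) := by rw [mul_assoc]
      _ = vp k * (q • (vp j * vm k)) := by
            rw [f3 j k hj1 hk hj hk' (by omega)]
      _ = q • (vp k * vp j * vm k) := by rw [mul_smul_comm, mul_assoc]
      _ = q • (q⁻¹ • (vp j * vp k) * vm k) := by rw [r1 k j hk hkj hj]
      _ = vp j * (vp k * vm k) := by
            rw [smul_mul_assoc, smul_smul, hqi', one_smul, mul_assoc]
  have cswm : ∀ k j, 1 ≤ k → k < j → j ≤ n →
      (vp k * vm k) * vm j = vm j * (vp k * vm k) := by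
    intro k j hk hkj hj
    have hk' : k ≤ n := le_trans hkj.le hj
    have hj1 : 1 ≤ j := le_trans hk hkj.le
    calc (vp k * vm k) * vm j = vp k * (vm k * vm j) := by rw [mul_assoc]
      _ = vp k * (q • (vm j * vm k)) := by rw [f2 k j hk hkj hj]
      _ = q • (vp k * vm j * vm k) := by rw [mul_smul_comm, mul_assoc]
      _ = q • (q⁻¹ • (vm j * vp k) * vm k) := by
            rw [r3 k j hk hj1 hk' hj (by omega)]
      _ = vm j * (vp k * vm k) := by
            rw [smul_mul_assoc, smul_smul, hqi', one_smul, mul_assoc]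
  -- big-index terms q²-commute
  have bwp : ∀ j k, 1 ≤ j → j < k → k ≤ n →
      (vp k * vm k) * vp j = (q * q) • (vp j * (vp k * vm k)) := by
    intro j k hj hjk hk
    have hj' : j ≤ n := le_trans hjk.le hk
    have hk1 : 1 ≤ k := le_trans hj hjk.le
    calc (vp k * vm k) * vp j = vp k * (vm k * vp j) := by rw [mul_assoc]
      _ = vp k * (q • (vp j * vm k)) := by
            rw [f3 j k hj hk1 hj' hk (by omega)]
      _ = q • (vp k * vp j * vm k) := by rw [mul_smul_comm, mul_assoc]
      _ = q • (q • (vp j * vp k) * vm k) := by rw [f1 j k hj hjk hk]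
      _ = (q * q) • (vp j * (vp k * vm k)) := by
            rw [smul_mul_assoc, smul_smul, mul_assoc]
  have bwm : ∀ j k, 1 ≤ j → j < k → k ≤ n →
      vm j * (vp k * vm k) = (q * q) • ((vp k * vm k) * vm j) := by
    intro j k hj hjk hk
    have hj' : j ≤ n := le_trans hjk.le hk
    have hk1 : 1 ≤ k := le_trans hj hjk.le
    have h : (vp k * vm k) * vm j = (q⁻¹ * q⁻¹) • (vm j * (vp k * vm k)) := by
      calc (vp k * vm k) * vm j = vp k * (vm k * vm j) := by rw [mul_assoc]
        _ = vp k * (q⁻¹ • (vm j * vm k)) := by rw [r2 j k hj hjk hk]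
        _ = q⁻¹ • (vp k * vm j * vm k) := by rw [mul_smul_comm, mul_assoc]
        _ = q⁻¹ • (q⁻¹ • (vm j * vp k) * vm k) := by
              rw [r3 k j hk1 hj hk hj' (by omega)]
        _ = (q⁻¹ * q⁻¹) • (vm j * (vp k * vm k)) := by
              rw [smul_mul_assoc, smul_smul, mul_assoc]
    rw [h, smul_smul]
    have : q * q * (q⁻¹ * q⁻¹) = 1 := by field_simp
    rw [this, one_smul]
  -- the telescoped commutator
  have hc : ∀ j, 1 ≤ j → j ≤ n →
      vp j * vm j - vm j * vp j =
        ∑ k ∈ Finset.Icc (j + 1) n,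
          ((q - q⁻¹) * q⁻¹ ^ (k - (j + 1))) • (vp k * vm k) := by
    have key : ∀ m j, 1 ≤ j → j ≤ n → n - j = m →
        vp j * vm j - vm j * vp j =
          ∑ k ∈ Finset.Icc (j + 1) n,
            ((q - q⁻¹) * q⁻¹ ^ (k - (j + 1))) • (vp k * vm k) := by
      intro m
      induction m with
      | zero =>
        intro j h1 h2 h3
        have hjn : j = n := by omega
        subst hjn
        rw [r5, sub_self, Finset.Icc_eq_empty (by omega), Finset.sum_empty]
      | succ m ih =>
        intro j h1 h2 h3
        have hjn : j + 1 ≤ n := by omega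
        have ihc := ih (j + 1) (by omega) hjn (by omega)
        have expand : q • (vp (j+1) * vm (j+1)) - q⁻¹ • (vm (j+1) * vp (j+1))
            = q⁻¹ • (vp (j+1) * vm (j+1) - vm (j+1) * vp (j+1))
              + (q - q⁻¹) • (vp (j+1) * vm (j+1)) := by
          rw [smul_sub, sub_smul]; abel
        rw [r4 j h1 hjn, expand, ihc, Finset.smul_sum]
        have hsplit : Finset.Icc (j + 1) n = insert (j + 1) (Finset.Icc (j + 2) n) := by
          ext x; simp only [Finset.mem_Icc, Finset.mem_insert]; omega
        rw [hsplit, Finset.sum_insert (by simp)]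
        have hfirst : ((q - q⁻¹) * q⁻¹ ^ ((j + 1) - (j + 1))) • (vp (j+1) * vm (j+1))
            = (q - q⁻¹) • (vp (j+1) * vm (j+1)) := by
          simp
        rw [hfirst]
        rw [add_comm]
        congr 1
        refine Finset.sum_congr rfl fun k hk => ?_
        simp only [Finset.mem_Icc] at hk
        rw [smul_smul]
        congr 1
        have e : k - (j + 1) = (k - (j + 2)) + 1 := by omega
        rw [e, pow_succ]
        ring
    intro j h1 h2
    exact key (n - j) j h1 h2 rfl
  -- scalar identity
  have hsc : ∀ j k, 1 ≤ j → j < k → k ≤ n →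
      q ^ (n - j) * ((q - q⁻¹) * q⁻¹ ^ (k - (j + 1))) + q ^ (n - k)
        = q ^ (n - k) * (q * q) := by
    intro j k hj hjk hk
    have e1 : n - j = (n - k) + ((k - (j + 1)) + 1) := by omega
    rw [e1, pow_add, pow_succ]
    have e2 : q ^ (k - (j + 1)) * q⁻¹ ^ (k - (j + 1)) = 1 := by
      rw [← mul_pow, hqi', one_pow]
    have e3 : (q ^ (k - (j+1)) * q) * ((q - q⁻¹) * q⁻¹ ^ (k - (j+1))) = q * q - 1 := by
      calc (q ^ (k - (j+1)) * q) * ((q - q⁻¹) * q⁻¹ ^ (k - (j+1)))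
          = (q ^ (k - (j+1)) * q⁻¹ ^ (k - (j+1))) * (q * (q - q⁻¹)) := by ring
        _ = q * q - q * q⁻¹ := by rw [e2, one_mul, mul_sub]
        _ = q * q - 1 := by rw [hqi']
    calc q ^ (n - k) * (q ^ (k - (j+1)) * q) * ((q - q⁻¹) * q⁻¹ ^ (k - (j+1))) + q ^ (n - k)
        = q ^ (n - k) * ((q ^ (k - (j+1)) * q) * ((q - q⁻¹) * q⁻¹ ^ (k - (j+1)))) + q ^ (n - k) := by
          ring
      _ = q ^ (n - k) * (q * q - 1) + q ^ (n - k) := by rw [e3]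
      _ = q ^ (n - k) * (q * q) := by ring
  -- tail sum commutes with vp j
  have hphi_p : ∀ j, 1 ≤ j → j ≤ n →
      (∑ k ∈ Finset.Icc j n, q ^ (n - k) • (vp k * vm k)) * vp j
        = vp j * ∑ k ∈ Finset.Icc j n, q ^ (n - k) • (vp k * vm k) := by
    intro j hj hjn
    have hsplit : Finset.Icc j n = insert j (Finset.Icc (j + 1) n) := by
      ext x; simp only [Finset.mem_Icc, Finset.mem_insert]; omega
    have hnm : j ∉ Finset.Icc (j + 1) n := by simp
    rw [hsplit, Finset.sum_insert hnm, add_mul, mul_add, smul_mul_assoc, mul_smul_comm,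
        Finset.sum_mul, Finset.mul_sum]
    have h2 : vm j * vp j = vp j * vm j
        - ∑ k ∈ Finset.Icc (j + 1) n,
            ((q - q⁻¹) * q⁻¹ ^ (k - (j + 1))) • (vp k * vm k) := by
      rw [← hc j hj hjn]; abel
    have hwj : (vp j * vm j) * vp j = vp j * (vp j * vm j)
        - ∑ k ∈ Finset.Icc (j + 1) n,
            ((q - q⁻¹) * q⁻¹ ^ (k - (j + 1))) • (vp j * (vp k * vm k)) := by
      calc (vp j * vm j) * vp j = vp j * (vm j * vp j) := by rw [mul_assoc]
        _ = vp j * (vp j * vm j)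
            - vp j * ∑ k ∈ Finset.Icc (j + 1) n,
                ((q - q⁻¹) * q⁻¹ ^ (k - (j + 1))) • (vp k * vm k) := by
              rw [h2, mul_sub]
        _ = _ := by
              rw [Finset.mul_sum]
              congr 1
              exact Finset.sum_congr rfl fun k _ => (mul_smul_comm _ _ _)
    rw [hwj, smul_sub, Finset.smul_sum]
    have hterm : ∀ k ∈ Finset.Icc (j + 1) n,
        (q ^ (n - k) • (vp k * vm k)) * vp j
          = (q ^ (n - k) * (q * q)) • (vp j * (vp k * vm k)) := by
      intro k hk
      simp only [Finset.mem_Icc] at hk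
      rw [smul_mul_assoc, bwp j k hj (by omega) hk.2, smul_smul]
    rw [Finset.sum_congr rfl hterm]
    have hterm2 : ∀ k ∈ Finset.Icc (j + 1) n,
        vp j * (q ^ (n - k) • (vp k * vm k)) = q ^ (n - k) • (vp j * (vp k * vm k)) := by
      intro k _; rw [mul_smul_comm]
    rw [Finset.sum_congr rfl hterm2]
    have hterm3 : ∀ k ∈ Finset.Icc (j + 1) n,
        q ^ (n - j) • ((q - q⁻¹) * q⁻¹ ^ (k - (j + 1))) • (vp j * (vp k * vm k))
          = (q ^ (n - j) * ((q - q⁻¹) * q⁻¹ ^ (k - (j + 1)))) • (vp j * (vp k * vm k)) := by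
      intro k _; rw [smul_smul]
    rw [Finset.sum_congr rfl hterm3, sub_add_eq_add_sub, add_sub_assoc, ← Finset.sum_sub_distrib]
    congr 1
    refine Finset.sum_congr rfl fun k hk => ?_
    simp only [Finset.mem_Icc] at hk
    rw [← sub_smul]
    congr 1
    linear_combination (-1 : K) * hsc j k hj (by omega) hk.2
  -- tail sum commutes with vm j
  have hphi_m : ∀ j, 1 ≤ j → j ≤ n →
      (∑ k ∈ Finset.Icc j n, q ^ (n - k) • (vp k * vm k)) * vm j
        = vm j * ∑ k ∈ Finset.Icc j n, q ^ (n - k) • (vp k * vm k) := by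
    intro j hj hjn
    have hsplit : Finset.Icc j n = insert j (Finset.Icc (j + 1) n) := by
      ext x; simp only [Finset.mem_Icc, Finset.mem_insert]; omega
    have hnm : j ∉ Finset.Icc (j + 1) n := by simp
    rw [hsplit, Finset.sum_insert hnm, add_mul, mul_add, smul_mul_assoc, mul_smul_comm,
        Finset.sum_mul, Finset.mul_sum]
    have hwj : (vp j * vm j) * vm j = vm j * (vp j * vm j)
        + ∑ k ∈ Finset.Icc (j + 1) n,
            ((q - q⁻¹) * q⁻¹ ^ (k - (j + 1))) • ((vp k * vm k) * vm j) := by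
      have h2 : vp j * vm j = vm j * vp j
          + ∑ k ∈ Finset.Icc (j + 1) n,
              ((q - q⁻¹) * q⁻¹ ^ (k - (j + 1))) • (vp k * vm k) := by
        rw [← hc j hj hjn]; abel
      calc (vp j * vm j) * vm j
          = (vm j * vp j
              + ∑ k ∈ Finset.Icc (j + 1) n,
                  ((q - q⁻¹) * q⁻¹ ^ (k - (j + 1))) • (vp k * vm k)) * vm j := by
            rw [← h2]
        _ = vm j * (vp j * vm j)
            + ∑ k ∈ Finset.Icc (j + 1) n,
                ((q - q⁻¹) * q⁻¹ ^ (k - (j + 1))) • ((vp k * vm k) * vm j) := by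
            rw [add_mul, Finset.sum_mul, mul_assoc]
            congr 1
            exact Finset.sum_congr rfl fun k _ => (smul_mul_assoc _ _ _)
    rw [hwj, smul_add, Finset.smul_sum]
    have hterm : ∀ k ∈ Finset.Icc (j + 1) n,
        vm j * (q ^ (n - k) • (vp k * vm k))
          = (q ^ (n - k) * (q * q)) • ((vp k * vm k) * vm j) := by
      intro k hk
      simp only [Finset.mem_Icc] at hk
      rw [mul_smul_comm, bwm j k hj (by omega) hk.2, smul_smul]
    rw [Finset.sum_congr rfl hterm]
    have hterm2 : ∀ k ∈ Finset.Icc (j + 1) n,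
        (q ^ (n - k) • (vp k * vm k)) * vm j = q ^ (n - k) • ((vp k * vm k) * vm j) := by
      intro k _; rw [smul_mul_assoc]
    rw [Finset.sum_congr rfl hterm2]
    have hterm3 : ∀ k ∈ Finset.Icc (j + 1) n,
        q ^ (n - j) • ((q - q⁻¹) * q⁻¹ ^ (k - (j + 1))) • ((vp k * vm k) * vm j)
          = (q ^ (n - j) * ((q - q⁻¹) * q⁻¹ ^ (k - (j + 1)))) • ((vp k * vm k) * vm j) := by
      intro k _; rw [smul_smul]
    rw [Finset.sum_congr rfl hterm3, add_assoc, ← Finset.sum_add_distrib]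
    congr 1
    refine Finset.sum_congr rfl fun k hk => ?_
    simp only [Finset.mem_Icc] at hk
    rw [← add_smul]
    congr 1
    exact hsc j k hj (by omega) hk.2
  -- full sum commutes with generators
  have comm_p : ∀ j, 1 ≤ j → j ≤ n →
      (∑ k ∈ Finset.Icc 1 n, q ^ (n - k) • (vp k * vm k)) * vp j
        = vp j * ∑ k ∈ Finset.Icc 1 n, q ^ (n - k) • (vp k * vm k) := by
    intro j hj hjn
    have hun : Finset.Icc 1 n = Finset.Icc 1 (j - 1) ∪ Finset.Icc j n := by
      ext x; simp only [Finset.mem_Icc, Finset.mem_union]; omega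
    have hdis : Disjoint (Finset.Icc 1 (j - 1)) (Finset.Icc j n) := by
      rw [Finset.disjoint_left]
      intro x hx1 hx2
      simp only [Finset.mem_Icc] at hx1 hx2
      omega
    rw [hun, Finset.sum_union hdis, add_mul, mul_add, hphi_p j hj hjn]
    congr 1
    rw [Finset.sum_mul, Finset.mul_sum]
    refine Finset.sum_congr rfl fun k hk => ?_
    simp only [Finset.mem_Icc] at hk
    rw [smul_mul_assoc, mul_smul_comm, cswp k j hk.1 (by omega) hjn]
  have comm_m : ∀ j, 1 ≤ j → j ≤ n →
      (∑ k ∈ Finset.Icc 1 n, q ^ (n - k) • (vp k * vm k)) * vm j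
        = vm j * ∑ k ∈ Finset.Icc 1 n, q ^ (n - k) • (vp k * vm k) := by
    intro j hj hjn
    have hun : Finset.Icc 1 n = Finset.Icc 1 (j - 1) ∪ Finset.Icc j n := by
      ext x; simp only [Finset.mem_Icc, Finset.mem_union]; omega
    have hdis : Disjoint (Finset.Icc 1 (j - 1)) (Finset.Icc j n) := by
      rw [Finset.disjoint_left]
      intro x hx1 hx2
      simp only [Finset.mem_Icc] at hx1 hx2
      omega
    rw [hun, Finset.sum_union hdis, add_mul, mul_add, hphi_m j hj hjn]
    congr 1
    rw [Finset.sum_mul, Finset.mul_sum]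
    refine Finset.sum_congr rfl fun k hk => ?_
    simp only [Finset.mem_Icc] at hk
    rw [smul_mul_assoc, mul_smul_comm, cswm k j hk.1 (by omega) hjn]
  intro x hx
  induction hx using Algebra.adjoin_induction with
  | mem y hy =>
    obtain ⟨i, h1, h2, h3⟩ := hy
    rcases h3 with rfl | rfl
    · exact comm_p i h1 h2
    · exact comm_m i h1 h2
  | algebraMap r => exact (Algebra.commutes r _).symm
  | add y z _ _ hy hz => exact hy.add_right hz
  | mul y z _ _ hy hz => exact hy.mul_right hz
end

section
/- Let V be a finite-dimensional module over a Hopf algebra H and suppose T = Σ_r c_r v_r ⊗ v_{-r} ∈ (V ⊗ V)^H corresponds under the canonical isomorphism (V ⊗ V)^H ≅ Hom_H(V*, V) (twisted by the isomorphism ε_K : V → V** given by v ↦ ev(Kv)) to an isomorphism f_T : V* → V. Then all coefficients c_r are nonzero, and f_T(v_i*) = c_{-i} q^{(2ρ, λ_i)} v_{-i}. -/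
open TensorProduct

set_option synthInstance.maxHeartbeats 1000000

/-- Let `V` be a (simple self-dual) module with weight basis indexed by a
finite set `ι` with weight-negation involution `neg`, and let
`T = Σ_r c_r v_r ⊗ v_{-r} ∈ (V ⊗ V)^H`.  Let `f_T : V* → V` be the map corresponding to
`T` under the canonical isomorphism `(V ⊗ V)^H ≅ Hom_H(V*, V)`, twisted by
`ε_K : V → V**`, `v ↦ ev(Kv)`, where `K` acts on the weight-`λ_i` basis vector by the
scalar `κ i = q^{(2ρ, λ_i)}`.  If `f_T` is an isomorphism, then all the coefficients
`c_r` are nonzero and `f_T(v_i*) = c_{-i} q^{(2ρ, λ_i)} v_{-i}`. -/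
theorem stmt9 {K : Type*} [Field K] {ι : Type*} [Fintype ι] [DecidableEq ι]
    (neg : ι → ι) (hneg : ∀ r, neg (neg r) = r)
    (c : ι → K) (κ : ι → K) (hκ : ∀ i, κ (neg i) * κ i = 1)
    (Kop : (ι → K) →ₗ[K] (ι → K))
    (hK : ∀ r, Kop (Pi.single r 1) = κ r • (Pi.single r 1 : ι → K))
    (T : (ι → K) ⊗[K] (ι → K))
    (hT : T = ∑ r, c r • ((Pi.single r 1 : ι → K) ⊗ₜ[K] (Pi.single (neg r) 1 : ι → K)))
    -- `f_T : V* → V`, the image of `T` under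
    -- `V ⊗ V --id ⊗ ε_K--> V ⊗ V** --≅--> Hom(V*, V)`
    (fT : Module.Dual K (ι → K) →ₗ[K] (ι → K))
    (hfT : fT = dualTensorHom K (Module.Dual K (ι → K)) (ι → K)
      ((TensorProduct.comm K (ι → K) (Module.Dual K (Module.Dual K (ι → K))))
        ((TensorProduct.map LinearMap.id ((Module.Dual.eval K (ι → K)) ∘ₗ Kop)) T)))
    (hbij : Function.Bijective fT) :
    (∀ r, c r ≠ 0) ∧
    ∀ i, fT (LinearMap.proj i) = (c (neg i) * κ i) • (Pi.single (neg i) 1 : ι → K) := by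
  have key : ∀ i, fT (LinearMap.proj i)
      = (c (neg i) * κ i) • (Pi.single (neg i) 1 : ι → K) := by
    intro i
    subst hfT hT
    simp only [map_sum, map_smul, TensorProduct.map_tmul,
      LinearMap.id_coe, id_eq, LinearMap.comp_apply, hK, map_smul,
      TensorProduct.comm_tmul, dualTensorHom_apply, LinearMap.sum_apply,
      LinearMap.smul_apply, Module.Dual.eval_apply, LinearMap.proj_apply,
      TensorProduct.smul_tmul', TensorProduct.smul_tmul]
    rw [Finset.sum_eq_single (neg i)]
    · simp [hneg, Pi.single_apply, mul_comm, smul_smul]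
    · intro b _ hb
      have : neg b ≠ i := fun h => hb (by rw [← h, hneg])
      simp [Pi.single_apply, this]
    · simp
  refine ⟨fun r hr => ?_, key⟩
  have h0 : fT (LinearMap.proj (neg r)) = 0 := by
    rw [key (neg r), hneg, hr, zero_mul, zero_smul]
  have : (LinearMap.proj (neg r) : Module.Dual K (ι → K)) = 0 := by
    apply hbij.1
    rw [h0, map_zero]
  have := congrFun (congrArg (fun f : Module.Dual K (ι → K) => (f : (ι → K) → K))
    this) (Pi.single (neg r) 1)
  simpa using this
end

section
/- Let A be the K-algebra generated by v_i, v_{-i} (i ∈ [1,n]) and v_0, subject to: v_i v_j = q^{-1} v_j v_i and v_{-j} v_{-i} = q^{-1} v_{-i} v_{-j} for i < j ≤ n+1 (with v_{n+1} := v_0); v_i v_{-j} = q^{-1} v_{-j} v_i for i ≠ j, i, j ≠ 0; (q−1) v_0² − v_n v_{-n} + v_{-n} v_n = 0; and v_i v_{-i} − v_{-i} v_i = q v_{i+1} v_{-i-1} − q^{-1} v_{-i-1} v_{i+1} for i ≤ n−1. Then the element Ψ = Σ_{i=1}^n (q^{n−i} v_i v_{-i} + q^{i−n−1} v_{-i}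 v_i) + v_0² satisfies Ψ = (1 + q^{1−2n})(Σ_{i=1}^n q^{n−i} v_i v_{-i} + ((1−q^{-1})/(q−q^{-1})) v_0²). -/
/-- In the braided symmetric algebra of the natural
`U_q(so_{2n+1})`-module, presented by generators `v_i = vp i`, `v_{-i} = vm i`
(`1 ≤ i ≤ n`) and `v_0`, the element
`Ψ = Σ_{i=1}^n (q^{n−i} v_i v_{-i} + q^{i−n−1} v_{-i} v_i) + v_0²` satisfies
`Ψ = (1 + q^{1−2n}) (Σ_{i=1}^n q^{n−i} v_i v_{-i} + ((1−q⁻¹)/(q−q⁻¹)) v_0²)`. -/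
theorem stmt11 {K : Type*} [Field K] {A : Type*} [Ring A] [Algebra K A]
    (q : K) (hq : q ≠ 0) (hq' : q - q⁻¹ ≠ 0) (hq1 : q ≠ 1) (n : ℕ)
    (vp vm : ℕ → A) (v0 : A)
    (r1 : ∀ i j, 1 ≤ i → i < j → j ≤ n → vp i * vp j = q⁻¹ • (vp j * vp i))
    (r1' : ∀ i, 1 ≤ i → i ≤ n → vp i * v0 = q⁻¹ • (v0 * vp i))
    (r2 : ∀ i j, 1 ≤ i → i < j → j ≤ n → vm j * vm i = q⁻¹ • (vm i * vm j))
    (r2' : ∀ i, 1 ≤ i → i ≤ n → v0 * vm i = q⁻¹ • (vm i * v0))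
    (r3 : ∀ i j, 1 ≤ i → 1 ≤ j → i ≤ n → j ≤ n → i ≠ j →
      vp i * vm j = q⁻¹ • (vm j * vp i))
    (r4 : (q - 1) • (v0 * v0) - vp n * vm n + vm n * vp n = 0)
    (r5 : ∀ i, 1 ≤ i → i + 1 ≤ n →
      vp i * vm i - vm i * vp i =
        q • (vp (i + 1) * vm (i + 1)) - q⁻¹ • (vm (i + 1) * vp (i + 1))) :
    (∑ i ∈ Finset.Icc 1 n,
        (q ^ ((n : ℤ) - (i : ℤ)) • (vp i * vm i) +
         q ^ ((i : ℤ) - (n : ℤ) - 1) • (vm i * vp i))) + v0 * v0 =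
      (1 + q ^ ((1 : ℤ) - 2 * (n : ℤ))) •
        ((∑ i ∈ Finset.Icc 1 n, q ^ ((n : ℤ) - (i : ℤ)) • (vp i * vm i)) +
          ((1 - q⁻¹) / (q - q⁻¹)) • (v0 * v0)) := by
  have hq2 : q + 1 ≠ 0 := by
    intro h
    apply hq'
    rw [show q = -1 by linear_combination h]
    norm_num
  have e0 : q - q⁻¹ = q⁻¹ * (-1 + q ^ 2) := by field_simp; ring
  have hqsq : (-1 : K) + q ^ 2 ≠ 0 := fun h => hq' (by rw [e0, h, mul_zero])
  -- formula for vm k * vp k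
  have P : ∀ m k : ℕ, n = k + m → 1 ≤ k →
      vm k * vp k = vp k * vm k
        - ((q - q⁻¹) * (q ^ ((k:ℤ) - (n:ℤ)) * q)) •
            (∑ j ∈ Finset.Icc (k+1) n, q ^ ((n:ℤ) - (j:ℤ)) • (vp j * vm j))
        - ((q - 1) * q ^ ((k:ℤ) - (n:ℤ))) • (v0 * v0) := by
    intro m
    induction m with
    | zero =>
      intro k hk hk1
      have hkn : k = n := by omega
      subst hkn
      rw [Finset.Icc_eq_empty (by omega), Finset.sum_empty, smul_zero, sub_zero,
        sub_self, zpow_zero, mul_one]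
      linear_combination (norm := module) r4
    | succ m ih =>
      intro k hk hk1
      have hkn : k + 1 ≤ n := by omega
      have ih' := ih (k+1) (by omega) (by omega)
      have hd : vm k * vp k = vp k * vm k - q • (vp (k+1) * vm (k+1))
          + q⁻¹ • (vm (k+1) * vp (k+1)) := by
        linear_combination (norm := module) - (r5 k hk1 hkn)
      have e2 : k + 1 + 1 = k + 2 := rfl
      rw [e2] at ih'
      have hIcc : Finset.Icc (k+1) n = insert (k+1) (Finset.Icc (k+2) n) := by
        ext x; simp only [Finset.mem_Icc, Finset.mem_insert]; omega
      have hnot : k + 1 ∉ Finset.Icc (k+2) n := by simp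
      rw [hd, ih', hIcc, Finset.sum_insert hnot]
      -- now a pure scalar identity; set t := q ^ (k - n)
      have hc1 : ((k+1:ℕ):ℤ) = (k:ℤ) + 1 := by push_cast; ring
      rw [hc1]
      have h1 : q ^ ((k:ℤ) + 1 - (n:ℤ)) = q ^ ((k:ℤ) - (n:ℤ)) * q := by
        rw [← zpow_add_one₀ hq]; congr 1; ring
      have h2 : q ^ ((n:ℤ) - ((k:ℤ) + 1)) = (q ^ ((k:ℤ) - (n:ℤ)))⁻¹ * q⁻¹ := by
        rw [← zpow_neg, ← zpow_neg_one, ← zpow_add₀ hq]; congr 1; ring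
      rw [h1, h2]
      have ht : q ^ ((k:ℤ) - (n:ℤ)) ≠ 0 := zpow_ne_zero _ hq
      match_scalars <;> field_simp <;> ring
  -- main partial-sum claim
  have C : ∀ m k : ℕ, n + 1 = k + m → 1 ≤ k →
      (∑ i ∈ Finset.Icc k n,
          (q ^ ((n : ℤ) - (i : ℤ)) • (vp i * vm i) +
           q ^ ((i : ℤ) - (n : ℤ) - 1) • (vm i * vp i))) =
        (1 + q ^ (2 * (k:ℤ) - 2 * (n:ℤ) - 1)) •
          (∑ i ∈ Finset.Icc k n, q ^ ((n : ℤ) - (i : ℤ)) • (vp i * vm i)) +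
        ((q ^ (2 * (k:ℤ) - 2 * (n:ℤ) - 1) - q) / (q + 1)) • (v0 * v0) := by
    intro m
    induction m with
    | zero =>
      intro k hk hk1
      have hkn : k = n + 1 := by omega
      subst hkn
      rw [Finset.Icc_eq_empty (by omega)]
      simp only [Finset.sum_empty, smul_zero, zero_add]
      rw [show 2 * ((n+1 : ℕ):ℤ) - 2 * (n:ℤ) - 1 = 1 by push_cast; ring, zpow_one,
        sub_self, zero_div, zero_smul]
    | succ m ih =>
      intro k hk hk1
      have hkn : k ≤ n := by omega
      have ih' := ih (k+1) (by omega) (by omega)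
      have hP := P (n - k) k (by omega) hk1
      have hIcc : Finset.Icc k n = insert k (Finset.Icc (k+1) n) := by
        ext x; simp only [Finset.mem_Icc, Finset.mem_insert]; omega
      have hnot : k ∉ Finset.Icc (k+1) n := by simp
      rw [hIcc, Finset.sum_insert hnot, Finset.sum_insert hnot, hP, ih']
      have hc1 : ((k+1:ℕ):ℤ) = (k:ℤ) + 1 := by push_cast; ring
      rw [hc1]
      have ht : q ^ ((k:ℤ) - (n:ℤ)) ≠ 0 := zpow_ne_zero _ hq
      have h1 : q ^ ((n:ℤ) - (k:ℤ)) = (q ^ ((k:ℤ) - (n:ℤ)))⁻¹ := by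
        rw [← zpow_neg]; congr 1; ring
      have h2 : q ^ ((k:ℤ) - (n:ℤ) - 1) = q ^ ((k:ℤ) - (n:ℤ)) * q⁻¹ := by
        rw [← zpow_neg_one, ← zpow_add₀ hq]
        try congr 1
        try ring
      have h3 : q ^ (2 * ((k:ℤ) + 1) - 2 * (n:ℤ) - 1) =
          q ^ ((k:ℤ) - (n:ℤ)) * q ^ ((k:ℤ) - (n:ℤ)) * q := by
        rw [← zpow_add₀ hq, ← zpow_add_one₀ hq]; congr 1; ring
      have h4 : q ^ (2 * (k:ℤ) - 2 * (n:ℤ) - 1) =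
          q ^ ((k:ℤ) - (n:ℤ)) * q ^ ((k:ℤ) - (n:ℤ)) * q⁻¹ := by
        rw [← zpow_add₀ hq, ← zpow_neg_one, ← zpow_add₀ hq]; congr 1; ring
      rw [h1, h2, h3, h4]
      match_scalars <;> (field_simp; try ring; try tauto)
  have hC := C n 1 (by omega) le_rfl
  rw [show 2 * ((1:ℕ):ℤ) - 2 * (n:ℤ) - 1 = 1 - 2 * (n:ℤ) by push_cast; ring] at hC
  have hs : ((1:K) - q⁻¹)/(q - q⁻¹) = 1/(q+1) := by
    rw [e0]; field_simp; ring
  rw [hs, hC]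
  match_scalars <;> (field_simp; try ring)
end

section
/- Let A_{k,l} be an associative algebra containing elements Ψ_{iβ} (1 ≤ i ≤ k, 1 ≤ β ≤ l) satisfying: Ψ_{jβ} X_{ia} = X_{ia} Ψ_{jβ} for i < j; X_{ja} Ψ_{iβ} − Ψ_{iβ} X_{ja} = (q − q^{-1}) X_{ia} Ψ_{jβ} for i < j; Ψ_{iβ} X_{ia} = q^{-1} X_{ia} Ψ_{iβ}; Ψ_{jβ} Y_{αb} = Y_{αb} Ψ_{jβ} for α < β; Ψ_{jα} Y_{βb} − Y_{βb} Ψ_{jα} = (q − q^{-1}) Y_{αb} Ψ_{jβ} for α < β; and Ψ_{iβ} Y_{βb} = q Y_{βb} Ψ_{iβ}; where Ψ_{iβ} = Σ_{a=1}^n X_{ia} Y_{βa}. Then: (i) Ψ_{jβ} Ψ_{iα} = Ψ_{iα} Ψ_{jβ} for i < j, α < β; (ii) Ψ_{jα} Ψ_{iβ} − Ψ_{iβ} Ψ_{jα} = (q − q^{-1}) Ψ_{iα} Ψ_{jβ} for i < j, α < β; (iii) Ψ_{iβ} Ψ_{iα} = q^{-1} Ψ_{iα} Ψ_{iβ} for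 α < β; (iv) Ψ_{jβ} Ψ_{iβ} = q Ψ_{iβ} Ψ_{jβ} for i < j. -/
/-- The commutation relations among the quadratic invariants
`Ψ_{iβ} = Σ_a X_{ia} Y_{βa}` in the algebra `A_{k,l}`, derived from the mixed
commutation relations between the `Ψ`'s and the generators `X`, `Y`. -/
theorem stmt13 {K : Type*} [Field K] {A : Type*} [Ring A] [Algebra K A]
    (q : K) (k l n : ℕ)
    (X : Fin k → Fin n → A) (Y : Fin l → Fin n → A)
    (Ψ : Fin k → Fin l → A)
    (hΨ : ∀ i β, Ψ i β = ∑ a, X i a * Y β a)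
    (h1 : ∀ (i j : Fin k) (β : Fin l) (a : Fin n), i < j →
      Ψ j β * X i a = X i a * Ψ j β)
    (h2 : ∀ (i j : Fin k) (β : Fin l) (a : Fin n), i < j →
      X j a * Ψ i β - Ψ i β * X j a = (q - q⁻¹) • (X i a * Ψ j β))
    (h3 : ∀ (i : Fin k) (β : Fin l) (a : Fin n),
      Ψ i β * X i a = q⁻¹ • (X i a * Ψ i β))
    (h4 : ∀ (j : Fin k) (α β : Fin l) (b : Fin n), α < β →
      Ψ j β * Y α b = Y α b * Ψ j β)
    (h5 : ∀ (j : Fin k) (α β : Fin l) (b : Fin n), α < β →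
      Ψ j α * Y β b - Y β b * Ψ j α = (q - q⁻¹) • (Y α b * Ψ j β))
    (h6 : ∀ (i : Fin k) (β : Fin l) (b : Fin n),
      Ψ i β * Y β b = q • (Y β b * Ψ i β)) :
    (∀ (i j : Fin k) (α β : Fin l), i < j → α < β →
      Ψ j β * Ψ i α = Ψ i α * Ψ j β) ∧
    (∀ (i j : Fin k) (α β : Fin l), i < j → α < β →
      Ψ j α * Ψ i β - Ψ i β * Ψ j α = (q - q⁻¹) • (Ψ i α * Ψ j β)) ∧
    (∀ (i : Fin k) (α β : Fin l), α < β →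
      Ψ i β * Ψ i α = q⁻¹ • (Ψ i α * Ψ i β)) ∧
    (∀ (i j : Fin k) (β : Fin l), i < j →
      Ψ j β * Ψ i β = q • (Ψ i β * Ψ j β)) := by
  refine ⟨?_, ?_, ?_, ?_⟩
  · intro i j α β hij hαβ
    rw [hΨ i α, Finset.mul_sum, Finset.sum_mul]
    refine Finset.sum_congr rfl fun a _ => ?_
    rw [← mul_assoc, h1 i j β a hij, mul_assoc, h4 j α β a hαβ, ← mul_assoc]
  · intro i j α β hij hαβ
    have key : Ψ i β * Ψ j α = Ψ j α * Ψ i β - (q - q⁻¹) • (Ψ i α * Ψ j β) := by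
      calc Ψ i β * Ψ j α = ∑ a, Ψ i β * (X j a * Y α a) := by
            rw [hΨ j α, Finset.mul_sum]
        _ = ∑ a, ((X j a * Y α a) * Ψ i β
              - (q - q⁻¹) • ((X i a * Y α a) * Ψ j β)) := by
            refine Finset.sum_congr rfl fun a _ => ?_
            have hx : Ψ i β * X j a
                = X j a * Ψ i β - (q - q⁻¹) • (X i a * Ψ j β) := by
              rw [← h2 i j β a hij]; abel
            rw [← mul_assoc, hx, sub_mul, smul_mul_assoc, mul_assoc, mul_assoc,
              h4 i α β a hαβ, h4 j α β a hαβ, ← mul_assoc, ← mul_assoc]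
        _ = Ψ j α * Ψ i β - (q - q⁻¹) • (Ψ i α * Ψ j β) := by
            rw [Finset.sum_sub_distrib, ← Finset.smul_sum, ← Finset.sum_mul,
              ← Finset.sum_mul, ← hΨ, ← hΨ]
    rw [key]; abel
  · intro i α β hαβ
    rw [hΨ i α, Finset.mul_sum, Finset.sum_mul, Finset.smul_sum]
    refine Finset.sum_congr rfl fun a _ => ?_
    rw [← mul_assoc, h3 i β a, smul_mul_assoc, mul_assoc, h4 i α β a hαβ,
      ← mul_assoc]
  · intro i j β hij
    rw [hΨ i β, Finset.mul_sum, Finset.sum_mul, Finset.smul_sum]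
    refine Finset.sum_congr rfl fun a _ => ?_
    rw [← mul_assoc, h1 i j β a hij, mul_assoc, h6 j β a, mul_smul_comm,
      ← mul_assoc]
end

section
/- In the algebra Λ generated by X_{ij} (1 ≤ i ≤ m, 1 ≤ j ≤ n) with the relations of the quantum exterior algebra (X_{il}X_{jk} + X_{jk}X_{il} + (q−q^{-1})X_{jl}X_{ik} = 0 and X_{ik}X_{jl} + X_{jl}X_{ik} = 0 for i<j, k<l; X_{ik}² = 0; X_{il}X_{ik} + q^{-1}X_{ik}X_{il} = 0 for k<l; X_{jk}X_{ik} + q^{-1}X_{ik}X_{jk} = 0 for i<j), the following holds: for all indices i and all t, s with λ_i ≥ t > s ≥ 0 (and t ≤ n), X_{i1} X_{i2} ⋯ X_{iλ_i} X_{i+1,1} X_{i+1,2} ⋯ X_{i+1,s} X_{i,t} = 0. -/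
/-- In the braided exterior algebra `Λ_q(V^{(m)} ⊗ V^{(n)})`, for all
`i` and all `t, s` with `λ_i ≥ t > s ≥ 0` (and `λ_i ≤ n`), the product
`X_{i1} ⋯ X_{iλ_i} · X_{i+1,1} ⋯ X_{i+1,s} · X_{i,t}` vanishes.  Formulated for
arbitrary elements `X i j` of an associative algebra satisfying the defining relations. -/
theorem stmt15 {K : Type*} [Field K] {A : Type*} [Ring A] [Algebra K A]
    (q : K) (m n : ℕ)
    (X : ℕ → ℕ → A)
    (h1 : ∀ i j k l, 1 ≤ i → i < j → j ≤ m → 1 ≤ k → k < l → l ≤ n →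
      X i l * X j k + X j k * X i l + (q - q⁻¹) • (X j l * X i k) = 0)
    (h2 : ∀ i j k l, 1 ≤ i → i < j → j ≤ m → 1 ≤ k → k < l → l ≤ n →
      X i k * X j l + X j l * X i k = 0)
    (h3 : ∀ i k, 1 ≤ i → i ≤ m → 1 ≤ k → k ≤ n → X i k * X i k = 0)
    (h4 : ∀ i k l, 1 ≤ i → i ≤ m → 1 ≤ k → k < l → l ≤ n →
      X i l * X i k + q⁻¹ • (X i k * X i l) = 0)
    (h5 : ∀ i j k, 1 ≤ i → i < j → j ≤ m → 1 ≤ k → k ≤ n →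
      X j k * X i k + q⁻¹ • (X i k * X j k) = 0) :
    ∀ i lam t s, 1 ≤ i → i + 1 ≤ m → 1 ≤ t → s < t → t ≤ lam → lam ≤ n →
      ((List.range' 1 lam).map (X i)).prod *
        ((List.range' 1 s).map (X (i + 1))).prod * X i t = 0 := by
  intro i lam t s hi him ht hst htlam hlamn
  -- Lemma A : a row product absorbs any of its own factors to zero
  have lemA : ∀ (r : ℕ), 1 ≤ r → r ≤ m → ∀ (b a t : ℕ), 1 ≤ a → a + b ≤ n + 1 →
      a ≤ t → t < a + b → ((List.range' a b).map (X r)).prod * X r t = 0 := by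
    intro r hr1 hrm b
    induction b with
    | zero => intro a t _ _ hat hta; omega
    | succ b ih =>
      intro a t ha hab hat hta
      rw [List.range'_concat, List.map_append, List.prod_append]
      simp only [List.map_cons, List.map_nil, List.prod_cons, List.prod_nil, mul_one, one_mul]
      by_cases hte : t = a + b
      · subst hte
        rw [mul_assoc, h3 r (a + b) hr1 hrm (by omega) (by omega), mul_zero]
      · have hlt : t < a + b := by omega
        have hq : X r (a + b) * X r t = -(q⁻¹ • (X r t * X r (a + b))) :=
          eq_neg_of_add_eq_zero_left
            (h4 r t (a + b) hr1 hrm (by omega) hlt (by omega))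
        rw [mul_assoc, hq, mul_neg, mul_smul_comm, ← mul_assoc,
          ih a t ha (by omega) hat hlt, zero_mul, smul_zero, neg_zero]
  -- Main induction on s
  have main : ∀ s t : ℕ, s < t → t ≤ lam →
      ((List.range' 1 lam).map (X i)).prod *
        ((List.range' 1 s).map (X (i + 1))).prod * X i t = 0 := by
    intro s
    induction s with
    | zero =>
      intro t hst htl
      simpa using lemA i hi (by omega) lam 1 t le_rfl (by omega) (by omega) (by omega)
    | succ s ih =>
      intro t hst htl
      have h1s : 1 + s = s + 1 := Nat.add_comm 1 s
      rw [List.range'_concat, List.map_append, List.prod_append]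
      simp only [List.map_cons, List.map_nil, List.prod_cons, List.prod_nil, mul_one, one_mul]
      rw [h1s]
      set P : A := ((List.range' 1 lam).map (X i)).prod with hP
      set Qs : A := ((List.range' 1 s).map (X (i + 1))).prod with hQ
      have hs1t : s + 1 < t := hst
      have htn : t ≤ n := le_trans htl hlamn
      have hrel := h1 i (i + 1) (s + 1) t hi (by omega) him (by omega) hs1t htn
      have key := congrArg (fun z => P * Qs * z) hrel
      simp only [mul_add, mul_zero, mul_smul_comm] at key
      -- first term vanishes by ih
      have e1 : P * Qs * (X i t * X (i + 1) (s + 1)) = 0 := by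
        rw [← mul_assoc, ih t (by omega) htl, zero_mul]
      -- third term vanishes using h2 and ih
      have hswap : X (i + 1) t * X i (s + 1) = -(X i (s + 1) * X (i + 1) t) :=
        eq_neg_of_add_eq_zero_right
          (h2 i (i + 1) (s + 1) t hi (by omega) him (by omega) hs1t htn)
      have e3 : P * Qs * (X (i + 1) t * X i (s + 1)) = 0 := by
        rw [hswap, mul_neg, ← mul_assoc, ih (s + 1) (by omega) (by omega), zero_mul,
          neg_zero]
      rw [e1, e3, smul_zero, add_zero, zero_add] at key
      simpa [mul_assoc] using key
  exact main s t hst htlam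
end
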